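/- arXiv:2304.03541 — 5 statements merged into one kernel-verified Lean document; each statement's English description precedes it below -/
import Mathlib

section
/- Let x_1,...,x_n be distinct elements of F_q, let f ∈ F_q[X] with deg(f) < k, and let y ∈ F_q^n with y_i = f(x_i) + e_i where the error vector e has Hamming weight t ≤ ⌊(n-k)/2⌋. Suppose (E_1, N_1) and (E_2, N_2) are nonzero pairs of polynomials with deg(E_i) ≤ ⌊(n-k)/2⌋ and deg(N_i) < k + ⌈(n-k)/2⌉ satisfying y_i·E_j(x_i) = N_j(x_i) for all i and j ∈ {1,2}. Then N_1·E_2 = N_2·E_1, and N_1/E_1 = N_2/E_2 = f as rational functions. -/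
/-!
The residual `N - E * f` of a solution of the key equation takes the value `e i * E (x i)` at
`x i`, so it vanishes at the `n - t` error-free positions. Its degree is below
`k + ⌈(n - k) / 2⌉ ≤ n - t`, so it is zero: every solution satisfies `N = E * f`, and then
`E ≠ 0` because the pair is nonzero.
-/

open Polynomial Finset

theorem card_filter_eq_zero_add_hammingNorm {ι β : Type*} [Fintype ι] [Zero β] [DecidableEq β]
    (e : ι → β) : #{i | e i = 0} + hammingNorm e = Fintype.card ι :=
  card_filter_add_card_filter_not _

theorem Polynomial.degree_sub_mul_lt {R : Type*} [Ring R] {N E f : R[X]} {a b c : ℕ}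
    (hN : N.degree < c) (hE : E.degree ≤ a) (hf : f.degree < b) (habc : a + b ≤ c) :
    (N - E * f).degree < c := by
  have hEf : (E * f).degree < c := by
    by_cases hE0 : E = 0
    · simp [hE0]
    calc (E * f).degree ≤ E.degree + f.degree := degree_mul_le E f
      _ < a + b := WithBot.add_lt_add_of_le_of_lt (degree_ne_bot.mpr hE0) hE hf
      _ ≤ c := mod_cast habc
  exact (degree_sub_le N (E * f)).trans_lt (max_lt hN hEf)

section KeyEquation

variable {R ι : Type*} [CommRing R] {x : ι → R} {f E N : R[X]} {e y : ι → R}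

theorem eval_sub_mul_of_key_equation (hy : ∀ i, y i = f.eval (x i) + e i)
    (hkey : ∀ i, y i * E.eval (x i) = N.eval (x i)) (i : ι) :
    (N - E * f).eval (x i) = e i * E.eval (x i) := by
  rw [eval_sub, eval_mul, ← hkey i, hy i]
  ring

theorem eq_mul_of_key_equation [IsDomain R] [DecidableEq R] [Fintype ι]
    (hx : Function.Injective x) (hy : ∀ i, y i = f.eval (x i) + e i)
    (hkey : ∀ i, y i * E.eval (x i) = N.eval (x i))
    (hdeg : (N - E * f).degree < (Fintype.card ι - hammingNorm e : ℕ)) : N = E * f := by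
  refine sub_eq_zero.mp <| eq_zero_of_degree_lt_of_eval_index_eq_zero {i | e i = 0}
    hx.injOn ?_ fun i hi => ?_
  · rwa [← card_filter_eq_zero_add_hammingNorm e, Nat.add_sub_cancel] at hdeg
  · rw [eval_sub_mul_of_key_equation hy hkey, (mem_filter.mp hi).2, zero_mul]

end KeyEquation

theorem berlekampWelch_eq_mul {R : Type*} [CommRing R] [IsDomain R] [DecidableEq R] {n k : ℕ}
    (hkn : k ≤ n) {x : Fin n → R} (hx : Function.Injective x) {f : R[X]} (hf : f.degree < k)
    {e y : Fin n → R} (he : hammingNorm e ≤ (n - k) / 2) (hy : ∀ i, y i = f.eval (x i) + e i)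
    {E N : R[X]} (hne : ¬(E = 0 ∧ N = 0)) (hE : E.degree ≤ ((n - k) / 2 : ℕ))
    (hN : N.degree < (k + (n - k + 1) / 2 : ℕ))
    (hkey : ∀ i, y i * E.eval (x i) = N.eval (x i)) :
    E ≠ 0 ∧ N = E * f := by
  have hagree : k + (n - k + 1) / 2 ≤ Fintype.card (Fin n) - hammingNorm e := by
    rw [Fintype.card_fin]
    omega
  have hNEf := eq_mul_of_key_equation hx hy hkey <|
    (degree_sub_mul_lt hN hE hf (by omega)).trans_le (mod_cast hagree)
  exact ⟨fun hE0 => hne ⟨hE0, by rw [hNEf, hE0, zero_mul]⟩, hNEf⟩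

theorem stmt_6_general (F : Type) [Field F] [DecidableEq F] (n k t : ℕ) (hkn : k ≤ n)
    (x : Fin n → F) (hx : Function.Injective x)
    (f : Polynomial F) (hf : f.degree < k)
    (e : Fin n → F) (ht : hammingNorm e = t) (htle : t ≤ (n - k) / 2)
    (y : Fin n → F) (hy : ∀ i, y i = Polynomial.eval (x i) f + e i)
    (E₁ N₁ E₂ N₂ : Polynomial F)
    (h₁ne : ¬(E₁ = 0 ∧ N₁ = 0)) (h₂ne : ¬(E₂ = 0 ∧ N₂ = 0))
    (hE₁ : E₁.degree ≤ ((n - k) / 2 : ℕ)) (hE₂ : E₂.degree ≤ ((n - k) / 2 : ℕ))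
    (hN₁ : N₁.degree < (k + (n - k + 1) / 2 : ℕ)) (hN₂ : N₂.degree < (k + (n - k + 1) / 2 : ℕ))
    (hkey₁ : ∀ i, y i * Polynomial.eval (x i) E₁ = Polynomial.eval (x i) N₁)
    (hkey₂ : ∀ i, y i * Polynomial.eval (x i) E₂ = Polynomial.eval (x i) N₂) :
    N₁ * E₂ = N₂ * E₁ ∧ E₁ ≠ 0 ∧ E₂ ≠ 0 ∧ N₁ = E₁ * f ∧ N₂ = E₂ * f := by
  have he : hammingNorm e ≤ (n - k) / 2 := ht ▸ htle
  obtain ⟨hE₁0, hN₁f⟩ := berlekampWelch_eq_mul hkn hx hf he hy h₁ne hE₁ hN₁ hkey₁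
  obtain ⟨hE₂0, hN₂f⟩ := berlekampWelch_eq_mul hkn hx hf he hy h₂ne hE₂ hN₂ hkey₂
  exact ⟨by rw [hN₁f, hN₂f]; ring, hE₁0, hE₂0, hN₁f, hN₂f⟩

/-- Berlekamp–Welch uniqueness lemma: any two nonzero solutions `(E₁,N₁)`, `(E₂,N₂)` of the
linearized key equations determine the same rational function, equal to `f`. -/
theorem stmt_6 (F : Type) [Field F] [Fintype F] [DecidableEq F] (n k t : ℕ) (hkn : k ≤ n)
    (x : Fin n → F) (hx : Function.Injective x)
    (f : Polynomial F) (hf : f.degree < k)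
    (e : Fin n → F) (ht : hammingNorm e = t) (htle : t ≤ (n - k) / 2)
    (y : Fin n → F) (hy : ∀ i, y i = Polynomial.eval (x i) f + e i)
    (E₁ N₁ E₂ N₂ : Polynomial F)
    (h₁ne : ¬(E₁ = 0 ∧ N₁ = 0)) (h₂ne : ¬(E₂ = 0 ∧ N₂ = 0))
    (hE₁ : E₁.degree ≤ ((n - k) / 2 : ℕ)) (hE₂ : E₂.degree ≤ ((n - k) / 2 : ℕ))
    (hN₁ : N₁.degree < (k + (n - k + 1) / 2 : ℕ)) (hN₂ : N₂.degree < (k + (n - k + 1) / 2 : ℕ))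
    (hkey₁ : ∀ i, y i * Polynomial.eval (x i) E₁ = Polynomial.eval (x i) N₁)
    (hkey₂ : ∀ i, y i * Polynomial.eval (x i) E₂ = Polynomial.eval (x i) N₂) :
    N₁ * E₂ = N₂ * E₁ ∧ E₁ ≠ 0 ∧ E₂ ≠ 0 ∧ N₁ = E₁ * f ∧ N₂ = E₂ * f :=
  stmt_6_general F n k t hkn x hx f hf e ht htle y hy E₁ N₁ E₂ N₂ h₁ne h₂ne hE₁ hE₂ hN₁ hN₂ hkey₁
    hkey₂
end

section
/- Let T be a finite set and U ⊆ T×T×T, and let H_3DM ∈ F_2^{3|T| × |U|} be the associated 3DM incidence matrix, whose column indexed by u = (x,y,z) ∈ U is the concatenation of the indicator vectors of x, y, and z in F_2^{|T|}. Then there exists a three-dimensional matching V ⊆ U (i.e., |V| = |T| and the elements of V have pairwise distinct first, second, and third coordinates) if and only if there exists e ∈ F_2^{|U|} of Hamming weight |T| with H_3DM·eᵀ equal to the all-ones vector. -/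
private lemma aux_inj {α T : Type*} [Fintype T] [DecidableEq α] [DecidableEq T]
    (V : Finset α) (f : α → T) (hcard : V.card = Fintype.card T)
    (hsurj : ∀ a, ∃ v ∈ V, f v = a) : Set.InjOn f V := by
  rw [← Finset.card_image_iff]
  have : V.image f = Finset.univ := by
    apply Finset.eq_univ_of_forall
    intro a
    obtain ⟨v, hv, hfv⟩ := hsurj a
    exact Finset.mem_image.mpr ⟨v, hv, hfv⟩
  rw [this, hcard, Finset.card_univ]

private lemma aux_fiber {α T : Type*} [Fintype T] [DecidableEq α] [DecidableEq T]
    (V : Finset α) (f : α → T) (hcard : V.card = Fintype.card T)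
    (hinj : Set.InjOn f V) : ∀ a, (V.filter fun v => f v = a).card = 1 := by
  have himg : V.image f = Finset.univ := by
    apply Finset.eq_univ_of_card
    rw [Finset.card_image_of_injOn hinj, hcard]
  intro a
  have ha : a ∈ V.image f := himg ▸ Finset.mem_univ a
  obtain ⟨v, hv, hfv⟩ := Finset.mem_image.mp ha
  rw [Finset.card_eq_one]
  refine ⟨v, ?_⟩
  ext w
  simp only [Finset.mem_filter, Finset.mem_singleton]
  constructor
  · rintro ⟨hw, hfw⟩
    exact hinj hw hv (hfw.trans hfv.symm)
  · rintro rfl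
    exact ⟨hv, hfv⟩

/-- 3DM reduces to syndrome decoding: there is a three-dimensional matching `V ⊆ U` iff there
is a binary vector `e` of Hamming weight `|T|` with `H_3DM · eᵀ` the all-ones vector. -/
theorem stmt_7 (T : Type) [Fintype T] [DecidableEq T]
    (U : Finset (T × T × T))
    (H : Matrix (Fin 3 × T) {u // u ∈ U} (ZMod 2))
    (hH : ∀ (a : T) (u : {u // u ∈ U}),
      H (0, a) u = (if u.val.1 = a then 1 else 0) ∧
      H (1, a) u = (if u.val.2.1 = a then 1 else 0) ∧
      H (2, a) u = (if u.val.2.2 = a then 1 else 0)) :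
    (∃ V ⊆ U, V.card = Fintype.card T ∧
        ∀ v ∈ V, ∀ w ∈ V, v ≠ w →
          v.1 ≠ w.1 ∧ v.2.1 ≠ w.2.1 ∧ v.2.2 ≠ w.2.2) ↔
    (∃ e : {u // u ∈ U} → ZMod 2, hammingNorm e = Fintype.card T ∧
        H.mulVec e = fun _ => 1) := by
  constructor
  · rintro ⟨V, hVU, hVcard, hVdist⟩
    refine ⟨fun u => if u.val ∈ V then 1 else 0, ?_, ?_⟩
    · rw [hammingNorm, ← hVcard]
      apply Finset.card_bij (fun u _ => u.val)
      · intro u hu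
        simp only [Finset.mem_filter, ne_eq, ite_eq_right_iff, Classical.not_imp] at hu
        exact hu.2.1
      · intro u _ v _ h
        exact Subtype.ext h
      · intro v hv
        refine ⟨⟨v, hVU hv⟩, ?_, rfl⟩
        simp [hv]
    · funext ia
      obtain ⟨i, a⟩ := ia
      have hinj1 : Set.InjOn (Prod.fst : T × T × T → T) V := by
        intro v hv w hw h
        by_contra hne; exact (hVdist v hv w hw hne).1 h
      have hinj2 : Set.InjOn (fun v : T × T × T => v.2.1) V := by
        intro v hv w hw h
        by_contra hne; exact (hVdist v hv w hw hne).2.1 h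
      have hinj3 : Set.InjOn (fun v : T × T × T => v.2.2) V := by
        intro v hv w hw h
        by_contra hne; exact (hVdist v hv w hw hne).2.2 h
      have key : ∀ (f : T × T × T → T), Set.InjOn f V →
          (Finset.univ.filter fun u : {u // u ∈ U} => f u.val = a ∧ u.val ∈ V).card = 1 := by
        intro f hinj
        rw [← aux_fiber V f hVcard hinj a]
        apply Finset.card_bij (fun u _ => u.val)
        · intro u hu
          simp only [Finset.mem_filter] at hu ⊢
          exact ⟨hu.2.2, hu.2.1⟩
        · intro u _ v _ h
          exact Subtype.ext h
        · intro v hv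
          simp only [Finset.mem_filter] at hv
          exact ⟨⟨v, hVU hv.1⟩, by simp [hv.1, hv.2], rfl⟩
      have hsum : ∀ (f : T × T × T → T), Set.InjOn f V →
          (∑ u : {u // u ∈ U}, (if f u.val = a then (1 : ZMod 2) else 0) *
            (if u.val ∈ V then 1 else 0)) = 1 := by
        intro f hinj
        have heq : ∀ u : {u // u ∈ U}, (if f u.val = a then (1 : ZMod 2) else 0) *
            (if u.val ∈ V then 1 else 0) = if f u.val = a ∧ u.val ∈ V then 1 else 0 := by
          intro u
          by_cases h1 : f u.val = a <;> by_cases h2 : u.val ∈ V <;> simp [h1, h2]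
        simp_rw [heq, Finset.sum_boole]
        rw [key f hinj]
        norm_num
      fin_cases i
      · show (∑ u : {u // u ∈ U}, H (0, a) u * (if u.val ∈ V then (1 : ZMod 2) else 0)) = 1
        simp_rw [fun u => (hH a u).1]
        exact hsum Prod.fst hinj1
      · show (∑ u : {u // u ∈ U}, H (1, a) u * (if u.val ∈ V then (1 : ZMod 2) else 0)) = 1
        simp_rw [fun u => (hH a u).2.1]
        exact hsum (fun v => v.2.1) hinj2
      · show (∑ u : {u // u ∈ U}, H (2, a) u * (if u.val ∈ V then (1 : ZMod 2) else 0)) = 1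
        simp_rw [fun u => (hH a u).2.2]
        exact hsum (fun v => v.2.2) hinj3
  · rintro ⟨e, hnorm, hmul⟩
    set S : Finset {u // u ∈ U} := Finset.univ.filter (fun u => e u ≠ 0) with hS
    set V : Finset (T × T × T) := S.image Subtype.val with hV
    have hVU : V ⊆ U := by
      intro v hv
      obtain ⟨u, _, rfl⟩ := Finset.mem_image.mp hv
      exact u.prop
    have hScard : S.card = Fintype.card T := hnorm
    have hVcard : V.card = Fintype.card T := by
      rw [hV, Finset.card_image_of_injective _ Subtype.val_injective, hScard]
    have hmem : ∀ v, v ∈ V ↔ ∃ u : {u // u ∈ U}, e u ≠ 0 ∧ u.val = v := by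
      intro v
      simp [hV, hS, Finset.mem_image, Finset.mem_filter]
    have key : ∀ (f : T × T × T → T) (i : Fin 3),
        (∀ a (u : {u // u ∈ U}), H (i, a) u = if f u.val = a then 1 else 0) →
        Set.InjOn f V := by
      intro f i hrow
      apply aux_inj V f hVcard
      intro a
      have h1 : H.mulVec e (i, a) = 1 := congrFun hmul (i, a)
      rw [Matrix.mulVec, dotProduct] at h1
      simp_rw [hrow a, ite_mul, one_mul, zero_mul] at h1
      rw [Finset.sum_ite, Finset.sum_const_zero, add_zero] at h1
      by_contra hcon
      push_neg at hcon
      have hz : ∀ u ∈ Finset.univ.filter (fun u : {u // u ∈ U} => f u.val = a), e u = 0 := by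
        intro u hu
        simp only [Finset.mem_filter] at hu
        by_contra he
        exact hcon u.val ((hmem u.val).mpr ⟨u, he, rfl⟩) hu.2
      rw [Finset.sum_eq_zero hz] at h1
      exact one_ne_zero h1.symm
    have hinj1 : Set.InjOn (Prod.fst : T × T × T → T) V := key Prod.fst 0 (fun a u => (hH a u).1)
    have hinj2 : Set.InjOn (fun v : T × T × T => v.2.1) V :=
      key _ 1 (fun a u => (hH a u).2.1)
    have hinj3 : Set.InjOn (fun v : T × T × T => v.2.2) V :=
      key _ 2 (fun a u => (hH a u).2.2)
    refine ⟨V, hVU, hVcard, ?_⟩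
    intro v hv w hw hne
    refine ⟨?_, ?_, ?_⟩
    · intro h; exact hne (hinj1 hv hw h)
    · intro h; exact hne (hinj2 hv hw h)
    · intro h; exact hne (hinj3 hv hw h)
end

section
/- Let H be uniformly distributed over F_q^{(n-k)×n}, s ∈ F_q^{n-k} fixed, t > 0, and N_t(C, s) the number of weight-t vectors e with e·Hᵀ = s. Then for any a > 0, the probability that |N_t(C,s) − C(n,t)(q-1)^t/q^{n-k}| ≥ a is at most (q-1)·C(n,t)(q-1)^t / (a²·q^{n-k}). -/
/-!
Write `N(H) = ∑_{|e| = t} 1[H e = s]`. For `e ≠ 0` the map `H ↦ H e` is a surjective linear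
map onto `F^{n-k}`, so `H e = s` for exactly a `q^{-(n-k)}` fraction of the matrices `H`; for
linearly independent `e, e'` the map `H ↦ (H e, H e')` is surjective as well, so the two events
are independent. A weight-`t` vector `e` is dependent only on its `q - 1` nonzero multiples, hence
`E[N²] ≤ (q - 1) E[N] + E[N]²`, i.e. `Var N ≤ (q - 1) E[N]`, and Chebyshev's inequality gives
the bound.
-/

open Finset Matrix

theorem card_filter_eq_mul_card_of_surjective {G M : Type*} [AddGroup G] [Fintype G]
    [AddMonoid M] [Fintype M] [DecidableEq M] (f : G →+ M) (hf : Function.Surjective f)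
    (c : M) : #{g | f g = c} * Fintype.card M = Fintype.card G := by
  have := card_eq_sum_card_fiberwise (f := f) (s := univ) (t := univ) (by simp)
  rw [card_univ] at this
  rw [this, sum_congr rfl fun d _ => AddMonoidHom.card_fiber_eq_of_mem_range f (hf d) (hf c),
    sum_const, card_univ, smul_eq_mul, mul_comm]

namespace Matrix

theorem surjective_mulVec_of_linearIndependent {F ι m n : Type*} [Field F] [Fintype ι]
    [Fintype n] [DecidableEq n] {v : ι → n → F} (hv : LinearIndependent F v) :
    Function.Surjective fun (H : Matrix m n F) i => H *ᵥ v i := by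
  classical
  obtain ⟨g, hg⟩ := LinearMap.exists_leftInverse_of_injective
    (Fintype.linearCombination F v) (LinearMap.ker_eq_bot.mpr hv.fintypeLinearCombination_injective)
  intro U
  refine ⟨LinearMap.toMatrix' (Fintype.linearCombination F U ∘ₗ g), funext fun i => ?_⟩
  have hgv : g (v i) = Pi.single i 1 := by
    simpa [Fintype.linearCombination_apply_single] using
      LinearMap.congr_fun hg (Pi.single i 1)
  simp [LinearMap.toMatrix'_mulVec, hgv, Fintype.linearCombination_apply_single]

variable {F : Type*} [Field F] [Fintype F] [DecidableEq F]
  {m n : Type*} [Fintype m] [DecidableEq m] [Fintype n] [DecidableEq n]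

theorem card_filter_forall_mulVec_eq {ι : Type*} [Fintype ι] [DecidableEq ι] {v : ι → n → F}
    (hv : LinearIndependent F v) (U : ι → m → F) :
    #{H : Matrix m n F | ∀ i, H *ᵥ v i = U i}
      * Fintype.card F ^ (Fintype.card m * Fintype.card ι) = Fintype.card (Matrix m n F) := by
  let f : Matrix m n F →+ (ι → m → F) :=
    { toFun := fun H i => H *ᵥ v i
      map_zero' := by ext; simp
      map_add' := fun H H' => by ext; simp [add_mulVec] }
  have := card_filter_eq_mul_card_of_surjective f (surjective_mulVec_of_linearIndependent hv) U
  simpa only [f, AddMonoidHom.coe_mk, ZeroHom.coe_mk, funext_iff, Fintype.card_fun, ← pow_mul]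
    using this

theorem card_filter_mulVec_eq {x : n → F} (hx : x ≠ 0) (s : m → F) :
    (#{H : Matrix m n F | H *ᵥ x = s} : ℝ)
      = Fintype.card (Matrix m n F) / Fintype.card F ^ Fintype.card m := by
  have hx' : LinearIndependent F ![x] := linearIndependent_unique_iff.mpr hx
  have := card_filter_forall_mulVec_eq (m := m) hx' ![s]
  simp only [Fin.forall_fin_one, cons_val_fin_one, Fintype.card_unique, mul_one] at this
  rw [eq_div_iff (by positivity)]
  exact_mod_cast this

theorem card_filter_mulVec_eq_and_mulVec_eq {x y : n → F}
    (hxy : LinearIndependent F ![x, y]) (s s' : m → F) :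
    (#{H : Matrix m n F | H *ᵥ x = s ∧ H *ᵥ y = s'} : ℝ)
      = Fintype.card (Matrix m n F) / (Fintype.card F ^ Fintype.card m) ^ 2 := by
  have := card_filter_forall_mulVec_eq (m := m) hxy ![s, s']
  simp only [Fin.forall_fin_two, cons_val_zero, cons_val_one, Fintype.card_fin] at this
  rw [eq_div_iff (by positivity), ← pow_mul]
  exact_mod_cast this

end Matrix

theorem card_filter_support_eq {ι β : Type*} [Fintype ι] [DecidableEq ι] [Fintype β]
    [DecidableEq β] [Zero β] (S : Finset ι) :
    #{e : ι → β | ({i | e i ≠ 0} : Finset ι) = S} = (Fintype.card β - 1) ^ #S := by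
  have hpi : ({e : ι → β | ({i | e i ≠ 0} : Finset ι) = S} : Finset (ι → β))
      = Fintype.piFinset fun i => if i ∈ S then ({0}ᶜ : Finset β) else {0} := by
    ext e
    simp only [mem_filter, mem_univ, true_and, Finset.ext_iff, Fintype.mem_piFinset]
    refine forall_congr' fun i => ?_
    split_ifs <;> simp_all
  rw [hpi, Fintype.card_piFinset]
  simp [apply_ite Finset.card, card_compl, prod_ite_mem]

theorem card_filter_hammingNorm_eq {ι β : Type*} [Fintype ι] [DecidableEq ι] [Fintype β]
    [DecidableEq β] [Zero β] (t : ℕ) :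
    #{e : ι → β | hammingNorm e = t}
      = (Fintype.card ι).choose t * (Fintype.card β - 1) ^ t := by
  rw [card_eq_sum_card_fiberwise (f := fun e : ι → β => ({i | e i ≠ 0} : Finset ι))
    (t := powersetCard t univ) (fun e he => by simpa [hammingNorm] using he)]
  have hfiber : ∀ S ∈ powersetCard t (univ : Finset ι),
      #{e ∈ ({e | hammingNorm e = t} : Finset (ι → β)) | ({i | e i ≠ 0} : Finset ι) = S}
        = (Fintype.card β - 1) ^ t := by
    intro S hS
    rw [mem_powersetCard] at hS
    rw [filter_filter, ← hS.2, ← card_filter_support_eq S]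
    congr 1
    exact filter_congr fun e _ => and_iff_right_of_imp fun h => by rw [hammingNorm, h]
  rw [sum_congr rfl hfiber, sum_const, card_powersetCard, card_univ, smul_eq_mul]

open Classical in
theorem card_filter_not_linearIndependent_pair_lt {F V : Type*} [Field F] [Fintype F]
    [AddCommGroup V] [Module F V] [DecidableEq V] {x : V} (hx : x ≠ 0) {W : Finset V}
    (hW : 0 ∉ W) : #{y ∈ W | ¬ LinearIndependent F ![x, y]} < Fintype.card F := by
  calc #{y ∈ W | ¬ LinearIndependent F ![x, y]}
      ≤ #((univ.erase 0).image (· • x)) := by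
        refine card_le_card fun y hy => ?_
        obtain ⟨hyW, hy⟩ := mem_filter.mp hy
        obtain ⟨c, rfl⟩ : ∃ c : F, c • x = y := by
          simpa [LinearIndependent.pair_iff' hx] using hy
        have hc : c ≠ 0 := by rintro rfl; exact hW (by simpa using hyW)
        exact mem_image_of_mem _ (mem_erase.mpr ⟨hc, mem_univ c⟩)
    _ ≤ #(univ.erase (0 : F)) := card_image_le
    _ < Fintype.card F := card_erase_lt_of_mem (mem_univ 0)

theorem Finset.sum_sub_sq_eq_of_sum_eq {ι : Type*} (s : Finset ι) (f : ι → ℝ) {μ : ℝ}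
    (h : ∑ i ∈ s, f i = #s * μ) :
    ∑ i ∈ s, (f i - μ) ^ 2 = ∑ i ∈ s, f i ^ 2 - #s * μ ^ 2 := by
  simp only [sub_sq, sum_add_distrib, sum_sub_distrib, ← sum_mul, ← mul_sum, h, sum_const,
    nsmul_eq_mul]
  ring

theorem Finset.sq_mul_card_filter_le_abs_sub_le_sum_sq {ι : Type*} (s : Finset ι) (f : ι → ℝ)
    (μ : ℝ) {a : ℝ} (ha : 0 ≤ a) :
    a ^ 2 * #{i ∈ s | a ≤ |f i - μ|} ≤ ∑ i ∈ s, (f i - μ) ^ 2 := by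
  calc a ^ 2 * #{i ∈ s | a ≤ |f i - μ|}
      = ∑ i ∈ s with a ≤ |f i - μ|, a ^ 2 := by rw [sum_const, nsmul_eq_mul, mul_comm]
    _ ≤ ∑ i ∈ s with a ≤ |f i - μ|, (f i - μ) ^ 2 := by
        refine sum_le_sum fun i hi => ?_
        rw [← sq_abs (f i - μ)]
        exact pow_le_pow_left₀ ha (mem_filter.mp hi).2 2
    _ ≤ ∑ i ∈ s, (f i - μ) ^ 2 :=
        sum_le_sum_of_subset_of_nonneg (filter_subset _ _) fun _ _ _ => sq_nonneg _

section SolutionCount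

variable {F : Type*} [Field F] [Fintype F] [DecidableEq F]
  {m n : Type*} [Fintype m] [DecidableEq m] [Fintype n] [DecidableEq n]
  {W : Finset (n → F)}

local notation "A" => (Fintype.card (Matrix m n F) : ℝ)
local notation "Q" => ((Fintype.card F : ℝ) ^ Fintype.card m)

theorem sum_card_filter_mulVec_eq (hW : 0 ∉ W) (s : m → F) :
    ∑ H : Matrix m n F, (#{e ∈ W | H *ᵥ e = s} : ℝ) = #W * (A / Q) := by
  have hswap := sum_card_bipartiteAbove_eq_sum_card_bipartiteBelow
    (s := (univ : Finset (Matrix m n F))) (t := W) (fun H e => H *ᵥ e = s)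
  simp only [bipartiteAbove, bipartiteBelow] at hswap
  rw [← Nat.cast_sum, hswap, Nat.cast_sum,
    sum_congr rfl fun e he => card_filter_mulVec_eq (ne_of_mem_of_not_mem he hW) s,
    sum_const, nsmul_eq_mul]

open Classical in
theorem sum_card_filter_mulVec_eq_and_mulVec_eq_le {x : n → F} (hx : x ∈ W) (hW : 0 ∉ W)
    (s : m → F) :
    ∑ y ∈ W, (#{H : Matrix m n F | H *ᵥ x = s ∧ H *ᵥ y = s} : ℝ)
      ≤ (Fintype.card F - 1) * (A / Q) + #W * (A / Q ^ 2) := by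
  have hx0 : x ≠ 0 := ne_of_mem_of_not_mem hx hW
  rw [← sum_filter_not_add_sum_filter W fun y => LinearIndependent F ![x, y]]
  gcongr
  · have hdep : (#{y ∈ W | ¬ LinearIndependent F ![x, y]} : ℝ) + 1 ≤ Fintype.card F := by
      exact_mod_cast card_filter_not_linearIndependent_pair_lt (F := F) hx0 hW
    calc _ ≤ ∑ y ∈ W with ¬ LinearIndependent F ![x, y],
              (#{H : Matrix m n F | H *ᵥ x = s} : ℝ) := by
          gcongr
          exact And.left
      _ ≤ (Fintype.card F - 1) * (A / Q) := by
          rw [sum_const, nsmul_eq_mul, card_filter_mulVec_eq hx0]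
          gcongr
          linarith
  · rw [sum_congr rfl fun y hy => card_filter_mulVec_eq_and_mulVec_eq (mem_filter.mp hy).2 s s,
      sum_const, nsmul_eq_mul]
    gcongr
    exact filter_subset _ _

theorem sum_card_filter_mulVec_eq_sq_le (hW : 0 ∉ W) (s : m → F) :
    ∑ H : Matrix m n F, (#{e ∈ W | H *ᵥ e = s} : ℝ) ^ 2
      ≤ #W * ((Fintype.card F - 1) * (A / Q) + #W * (A / Q ^ 2)) := by
  have hsq : ∀ H : Matrix m n F,
      #{e ∈ W | H *ᵥ e = s} ^ 2 = #{p ∈ W ×ˢ W | H *ᵥ p.1 = s ∧ H *ᵥ p.2 = s} := by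
    intro H
    rw [sq, ← card_product, ← filter_product]
  have hswap := sum_card_bipartiteAbove_eq_sum_card_bipartiteBelow
    (s := (univ : Finset (Matrix m n F))) (t := W ×ˢ W)
    (fun H p => H *ᵥ p.1 = s ∧ H *ᵥ p.2 = s)
  simp only [bipartiteAbove, bipartiteBelow] at hswap
  calc ∑ H : Matrix m n F, (#{e ∈ W | H *ᵥ e = s} : ℝ) ^ 2
      = ∑ x ∈ W, ∑ y ∈ W, (#{H : Matrix m n F | H *ᵥ x = s ∧ H *ᵥ y = s} : ℝ) := by
        simp only [← Nat.cast_pow, hsq, ← Nat.cast_sum, hswap, sum_product]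
    _ ≤ ∑ _x ∈ W, ((Fintype.card F - 1) * (A / Q) + #W * (A / Q ^ 2)) :=
        sum_le_sum fun x hx => sum_card_filter_mulVec_eq_and_mulVec_eq_le hx hW s
    _ = #W * ((Fintype.card F - 1) * (A / Q) + #W * (A / Q ^ 2)) := by
        rw [sum_const, nsmul_eq_mul]

theorem sum_card_filter_mulVec_eq_sub_sq_le (hW : 0 ∉ W) (s : m → F) :
    ∑ H : Matrix m n F, ((#{e ∈ W | H *ᵥ e = s} : ℝ) - #W / Q) ^ 2
      ≤ (Fintype.card F - 1) * #W * A / Q := by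
  have hmean : ∑ H : Matrix m n F, (#{e ∈ W | H *ᵥ e = s} : ℝ)
      = #(univ : Finset (Matrix m n F)) * (#W / Q) := by
    rw [sum_card_filter_mulVec_eq hW, card_univ]
    ring
  rw [sum_sub_sq_eq_of_sum_eq _ _ hmean, card_univ]
  calc ∑ H : Matrix m n F, (#{e ∈ W | H *ᵥ e = s} : ℝ) ^ 2 - A * (#W / Q) ^ 2
      ≤ #W * ((Fintype.card F - 1) * (A / Q) + #W * (A / Q ^ 2)) - A * (#W / Q) ^ 2 := by
        gcongr
        exact sum_card_filter_mulVec_eq_sq_le hW s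
    _ = (Fintype.card F - 1) * #W * A / Q := by ring

end SolutionCount

theorem stmt_11_general (F : Type) [Field F] [Fintype F] [DecidableEq F] (n k t : ℕ)
    (ht : 0 < t) (s : Fin (n - k) → F) (a : ℝ) (ha : 0 < a) :
    ((univ.filter (fun H : Matrix (Fin (n - k)) (Fin n) F =>
        a ≤ |((univ.filter (fun e : Fin n → F =>
            hammingNorm e = t ∧ H.mulVec e = s)).card : ℝ)
          - (n.choose t : ℝ) * ((Fintype.card F : ℝ) - 1) ^ t
              / (Fintype.card F : ℝ) ^ (n - k)|)).card : ℝ)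
      / (Fintype.card (Matrix (Fin (n - k)) (Fin n) F) : ℝ)
    ≤ ((Fintype.card F : ℝ) - 1) * ((n.choose t : ℝ) * ((Fintype.card F : ℝ) - 1) ^ t)
        / (a ^ 2 * (Fintype.card F : ℝ) ^ (n - k)) := by
  set W : Finset (Fin n → F) := {e | hammingNorm e = t}
  have hW : (0 : Fin n → F) ∉ W := by simpa [W] using ht.ne
  have hcard : (#W : ℝ) = n.choose t * ((Fintype.card F : ℝ) - 1) ^ t := by
    rw [card_filter_hammingNorm_eq, Fintype.card_fin, Nat.cast_mul, Nat.cast_pow,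
      Nat.cast_sub Fintype.card_pos, Nat.cast_one]
  have hsol : ∀ H : Matrix (Fin (n - k)) (Fin n) F,
      #{e | hammingNorm e = t ∧ H *ᵥ e = s} = #{e ∈ W | H *ᵥ e = s} := fun H => by
    rw [filter_filter]
  have hcheb := sq_mul_card_filter_le_abs_sub_le_sum_sq univ
    (fun H : Matrix (Fin (n - k)) (Fin n) F => (#{e ∈ W | H *ᵥ e = s} : ℝ))
    (#W / (Fintype.card F : ℝ) ^ (n - k)) ha.le
  have hvar := sum_card_filter_mulVec_eq_sub_sq_le hW s
  rw [Fintype.card_fin] at hvar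
  simp only [hsol, ← hcard]
  rw [div_le_div_iff₀ (by positivity) (by positivity)]
  calc _ = a ^ 2 * _ * (Fintype.card F : ℝ) ^ (n - k) := by ring
    _ ≤ (Fintype.card F - 1) * #W * Fintype.card (Matrix (Fin (n - k)) (Fin n) F)
          / (Fintype.card F : ℝ) ^ (n - k) * (Fintype.card F : ℝ) ^ (n - k) := by
        gcongr
        exact hcheb.trans hvar
    _ = _ := by field_simp

/-- Second moment bound: the probability (over uniform `H`) that the number of weight-`t`
solutions of `H·eᵀ = s` deviates from its mean `C(n,t)(q-1)^t/q^{n-k}` by at least `a`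
is at most `(q-1)·C(n,t)(q-1)^t / (a²·q^{n-k})`. -/
theorem stmt_11 (F : Type) [Field F] [Fintype F] [DecidableEq F] (n k t : ℕ)
    (hkn : k ≤ n) (ht : 0 < t) (s : Fin (n - k) → F) (a : ℝ) (ha : 0 < a) :
    ((univ.filter (fun H : Matrix (Fin (n - k)) (Fin n) F =>
        a ≤ |((univ.filter (fun e : Fin n → F =>
            hammingNorm e = t ∧ H.mulVec e = s)).card : ℝ)
          - (n.choose t : ℝ) * ((Fintype.card F : ℝ) - 1) ^ t
              / (Fintype.card F : ℝ) ^ (n - k)|)).card : ℝ)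
      / (Fintype.card (Matrix (Fin (n - k)) (Fin n) F) : ℝ)
    ≤ ((Fintype.card F : ℝ) - 1) * ((n.choose t : ℝ) * ((Fintype.card F : ℝ) - 1) ^ t)
        / (a ^ 2 * (Fintype.card F : ℝ) ^ (n - k)) :=
  stmt_11_general F n k t ht s a ha
end

section
/- Let H = (h_i)_{i∈I} be a finite family of functions from a finite set E to a finite set F, let X be a random variable taking values in E, and suppose the collision probability satisfies P(h(e) = h(e')) = (1 + ε)/|F|, where h is uniform over H and e, e' are independent copies of X. Then the expectation over h of the statistical distance between the distribution of h(e) and the uniform distribution on F is at most (1/2)·√ε. -/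
open Finset

/-!
Write `p_i` for the distribution of `h_i(e)` and `n = |F|`. Since `p_i` has total mass one, its
squared `ℓ²` distance to the uniform distribution is `‖p_i‖² - 1/n`, and `‖p_i‖²` is exactly the
collision probability of `h_i`; averaged over `i` this is `ε/n`. Cauchy–Schwarz on the joint
distribution of `(i, h_i(e))` turns this `ℓ²` bound into the `ℓ¹` bound `√ε` on the average
of `2 Δ(p_i, U)`.
-/

namespace LeftoverHash

theorem sum_sub_inv_card_sq {G : Type*} [Fintype G] [Nonempty G] {p : G → ℝ}
    (hp : ∑ g, p g = 1) :
    ∑ g, (p g - 1 / Fintype.card G) ^ 2 = ∑ g, p g ^ 2 - 1 / Fintype.card G := by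
  have hn : (Fintype.card G : ℝ) ≠ 0 := Nat.cast_ne_zero.mpr Fintype.card_ne_zero
  simp only [sub_sq, sum_add_distrib, sum_sub_distrib, ← sum_mul, ← mul_sum, hp, sum_const,
    card_univ, nsmul_eq_mul]
  field_simp
  ring

section ImageMass

variable {E G : Type*} [Fintype E] [Fintype G] [DecidableEq G]

def imageMass (f : E → G) (X : E → ℝ) (g : G) : ℝ :=
  ∑ e ∈ univ.filter (fun e => f e = g), X e

def collisionMass (f : E → G) (X : E → ℝ) : ℝ :=
  ∑ e, ∑ e', if f e = f e' then X e * X e' else 0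

theorem sum_imageMass (f : E → G) (X : E → ℝ) : ∑ g, imageMass f X g = ∑ e, X e :=
  sum_fiberwise univ f X

theorem collisionMass_eq_sum_sq_imageMass (f : E → G) (X : E → ℝ) :
    collisionMass f X = ∑ g, imageMass f X g ^ 2 := by
  have inner : ∀ e, (∑ e', if f e = f e' then X e * X e' else 0) = X e * imageMass f X (f e) := by
    intro e
    rw [imageMass, mul_sum, sum_filter]
    exact sum_congr rfl fun e' _ => by simp only [eq_comm]
  calc collisionMass f X = ∑ e, X e * imageMass f X (f e) := sum_congr rfl fun e _ => inner e
    _ = ∑ g, ∑ e ∈ univ.filter (fun e => f e = g), X e * imageMass f X (f e) :=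
      (sum_fiberwise univ f _).symm
    _ = ∑ g, imageMass f X g ^ 2 := by
      refine sum_congr rfl fun g _ => ?_
      rw [sum_congr rfl fun e he => by rw [(mem_filter.mp he).2], ← sum_mul, sq, imageMass]

theorem sum_sq_sub_inv_card_imageMass [Nonempty G] (f : E → G) {X : E → ℝ} (hX : ∑ e, X e = 1) :
    ∑ g, (imageMass f X g - 1 / Fintype.card G) ^ 2 = collisionMass f X - 1 / Fintype.card G := by
  rw [sum_sub_inv_card_sq ((sum_imageMass f X).trans hX), collisionMass_eq_sum_sq_imageMass]

end ImageMass

theorem sum_sum_abs_div_card_le {I G : Type*} [Fintype I] [Fintype G] [Nonempty I]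
    (q : I → G → ℝ) :
    (∑ i, ∑ g, |q i g|) / Fintype.card I
      ≤ √((Fintype.card G / Fintype.card I) * ∑ i, ∑ g, q i g ^ 2) := by
  have hm : (0 : ℝ) < Fintype.card I := Nat.cast_pos.mpr Fintype.card_pos
  have cauchySchwarz := sq_sum_le_card_mul_sum_sq (s := (univ : Finset (I × G)))
    (f := fun x => |q x.1 x.2|)
  simp only [sq_abs, Fintype.sum_prod_type, card_univ, Fintype.card_prod, Nat.cast_mul]
    at cauchySchwarz
  apply Real.le_sqrt_of_sq_le
  rw [div_pow, div_le_iff₀ (by positivity)]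
  calc (∑ i, ∑ g, |q i g|) ^ 2
      ≤ Fintype.card I * Fintype.card G * ∑ i, ∑ g, q i g ^ 2 := cauchySchwarz
    _ = Fintype.card G / Fintype.card I * (∑ i, ∑ g, q i g ^ 2) * Fintype.card I ^ 2 := by
      field_simp

end LeftoverHash

open LeftoverHash in
theorem stmt_14_general (I E G : Type) [Fintype I] [Fintype E] [Fintype G]
    [Nonempty I] [Nonempty G] [DecidableEq G]
    (h : I → E → G) (X : E → ℝ) (hX1 : ∑ e, X e = 1)
    (ε : ℝ)
    (hcol : (∑ i, ∑ e, ∑ e', if h i e = h i e' then X e * X e' else 0)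
        / (Fintype.card I : ℝ) = (1 + ε) / (Fintype.card G : ℝ)) :
    (∑ i, (1 / 2) * ∑ g : G,
        |(∑ e ∈ univ.filter (fun e => h i e = g), X e) - 1 / (Fintype.card G : ℝ)|)
      / (Fintype.card I : ℝ)
    ≤ (1 / 2) * Real.sqrt ε := by
  have hm : (Fintype.card I : ℝ) ≠ 0 := Nat.cast_ne_zero.mpr Fintype.card_ne_zero
  have hn : (Fintype.card G : ℝ) ≠ 0 := Nat.cast_ne_zero.mpr Fintype.card_ne_zero
  have l2_dist : ∑ i, ∑ g, (imageMass (h i) X g - 1 / Fintype.card G) ^ 2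
      = ε * Fintype.card I / Fintype.card G := by
    simp only [sum_sq_sub_inv_card_imageMass _ hX1, sum_sub_distrib, sum_const, card_univ,
      nsmul_eq_mul]
    have hcol' : ∑ i, collisionMass (h i) X = (1 + ε) / Fintype.card G * Fintype.card I :=
      (div_eq_iff hm).mp hcol
    rw [hcol']
    field_simp
    ring
  have l1_bound := sum_sum_abs_div_card_le fun i g => imageMass (h i) X g - 1 / Fintype.card G
  rw [l2_dist, show (Fintype.card G / Fintype.card I : ℝ) * (ε * Fintype.card I / Fintype.card G)
    = ε by field_simp] at l1_bound
  rw [← mul_sum, mul_div_assoc]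
  exact mul_le_mul_of_nonneg_left l1_bound (by norm_num)

/-- Leftover hash lemma: if a finite family of functions `h : I → E → G` has collision
probability `(1+ε)/|G|` on inputs drawn from a distribution `X`, then the average (over a
uniform member of the family) statistical distance between the image distribution and the
uniform distribution on `G` is at most `√ε / 2`. -/
theorem stmt_14 (I E G : Type) [Fintype I] [Fintype E] [Fintype G]
    [Nonempty I] [Nonempty G] [DecidableEq G]
    (h : I → E → G) (X : E → ℝ) (hX0 : ∀ e, 0 ≤ X e) (hX1 : ∑ e, X e = 1)
    (ε : ℝ)
    (hcol : (∑ i, ∑ e, ∑ e', if h i e = h i e' then X e * X e' else 0)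
        / (Fintype.card I : ℝ) = (1 + ε) / (Fintype.card G : ℝ)) :
    (∑ i, (1 / 2) * ∑ g : G,
        |(∑ e ∈ univ.filter (fun e => h i e = g), X e) - 1 / (Fintype.card G : ℝ)|)
      / (Fintype.card I : ℝ)
    ≤ (1 / 2) * Real.sqrt ε :=
  stmt_14_general I E G h X hX1 ε hcol
end

section
/- Let q = 2, let H be uniform over F_2^{(n-k)×n}, let s be uniform over F_2^{n-k}, and let e^Ber ∈ F_2^n have independent coordinates each Bernoulli with parameter τ. Then the expectation over H of the statistical distance between e^Ber·Hᵀ and s is at most (1/2)·√(2^{-k}·(1 + (1−2τ)²)^n). -/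
/-!
A family of hash functions `h i : α → V` in which two distinct inputs collide for exactly a
`1 / |V|` fraction of the keys `i` makes the collision probability of `h i` applied to a random
input `a ~ p`, averaged over `i`, equal to `1 / |V| + (1 - 1 / |V|) ∑ p²`. Hence the averaged
squared `L²` distance between the law of `h i a` and the uniform law on `V` is at most `∑ p²`,
and two applications of Cauchy–Schwarz turn this into the bound `(1/2) √(|V| ∑ p²)` on the averaged
statistical distance (leftover hash lemma). Random `(n-k) × n` matrices over `𝔽₂` form such a
family, since `H ↦ H e` is a surjective linear map for `e ≠ 0`, and for Bernoulli(τ) noise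
`∑ p² = (τ² + (1-τ)²)ⁿ = ((1 + (1-2τ)²)/2)ⁿ`.
-/

open Finset Matrix

theorem sum_le_sqrt_card_mul_sum_sq {ι : Type*} (s : Finset ι) (f : ι → ℝ) :
    ∑ i ∈ s, f i ≤ √(#s * ∑ i ∈ s, f i ^ 2) :=
  (le_abs_self _).trans (Real.abs_le_sqrt sq_sum_le_card_mul_sum_sq)

theorem AddMonoidHom.card_ker_mul_card_of_surjective {G K : Type*} [AddGroup G] [AddGroup K]
    (f : G →+ K) (hf : Function.Surjective f) : Nat.card f.ker * Nat.card K = Nat.card G := by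
  rw [← f.ker.card_mul_index, AddSubgroup.index_ker, f.range_eq_top_of_surjective hf,
    AddSubgroup.card_top]

def IsExactlyUniversal {ι α V : Type*} [Fintype ι] [Fintype V] [DecidableEq V]
    (h : ι → α → V) : Prop :=
  ∀ a b, a ≠ b → #{i | h i a = h i b} * Fintype.card V = Fintype.card ι

section LeftoverHash

variable {ι α V : Type*} [Fintype ι] [Fintype V] [DecidableEq V]

theorem sum_sq_sum_fiber [Fintype α] (f : α → V) (p : α → ℝ) :
    ∑ v, (∑ a with f a = v, p a) ^ 2 = ∑ a, ∑ b, if f a = f b then p a * p b else 0 := by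
  calc ∑ v, (∑ a with f a = v, p a) ^ 2
      = ∑ v, ∑ a with f a = v, p a * ∑ b with f b = f a, p b := by
        refine sum_congr rfl fun v _ => ?_
        rw [sq, sum_mul]
        refine sum_congr rfl fun a ha => ?_
        rw [(mem_filter.1 ha).2]
    _ = ∑ a, p a * ∑ b with f b = f a, p b := sum_fiberwise _ f _
    _ = ∑ a, ∑ b, if f a = f b then p a * p b else 0 := by
        simp only [sum_filter, mul_sum, mul_ite, mul_zero, eq_comm]

theorem sum_sq_sum_fiber_sub [Fintype α] [Nonempty V] (f : α → V) {p : α → ℝ}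
    (hp : ∑ a, p a = 1) :
    ∑ v, (∑ a with f a = v, p a - 1 / Fintype.card V) ^ 2
      = ∑ v, (∑ a with f a = v, p a) ^ 2 - 1 / Fintype.card V := by
  have hsum : ∑ v, ∑ a with f a = v, p a = 1 := (sum_fiberwise _ f p).trans hp
  have hV : (Fintype.card V : ℝ) ≠ 0 := by positivity
  simp only [sub_sq, sum_add_distrib, sum_sub_distrib, ← sum_mul, ← mul_sum, hsum, sum_const,
    card_univ, nsmul_eq_mul]
  field_simp
  ring

theorem IsExactlyUniversal.card_collisions [Nonempty V] [DecidableEq α] {h : ι → α → V}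
    (hh : IsExactlyUniversal h) (a b : α) :
    (#{i | h i a = h i b} : ℝ) = Fintype.card ι / Fintype.card V
      + if a = b then (Fintype.card ι : ℝ) * (1 - 1 / Fintype.card V) else 0 := by
  have hV : (Fintype.card V : ℝ) ≠ 0 := by positivity
  by_cases hab : a = b
  · simp only [hab, filter_true, card_univ, if_true]
    field_simp
    ring
  · rw [if_neg hab, add_zero, eq_div_iff hV]
    exact_mod_cast hh a b hab

theorem IsExactlyUniversal.sum_collisions [Fintype α] [Nonempty V] {h : ι → α → V}
    (hh : IsExactlyUniversal h) (p : α → ℝ) :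
    ∑ i, ∑ a, ∑ b, (if h i a = h i b then p a * p b else 0)
      = Fintype.card ι * ((∑ a, p a) ^ 2 / Fintype.card V
        + (1 - 1 / Fintype.card V) * ∑ a, p a ^ 2) := by
  classical
  calc ∑ i, ∑ a, ∑ b, (if h i a = h i b then p a * p b else 0)
      = ∑ a, ∑ b, (#{i | h i a = h i b} : ℝ) * (p a * p b) := by
        rw [sum_comm]
        refine sum_congr rfl fun a _ => ?_
        rw [sum_comm]
        simp only [sum_ite, sum_const_zero, add_zero, sum_const, nsmul_eq_mul]
    _ = _ := by
        simp only [hh.card_collisions, add_mul, ite_mul, zero_mul, sum_add_distrib,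
          sum_ite_eq, mem_univ, if_true, ← mul_sum, ← sum_mul, sq]
        ring

theorem IsExactlyUniversal.sum_sum_sq_sum_fiber_sub [Fintype α] [Nonempty V] {h : ι → α → V}
    (hh : IsExactlyUniversal h) {p : α → ℝ} (hp : ∑ a, p a = 1) :
    ∑ i, ∑ v, (∑ a with h i a = v, p a - 1 / Fintype.card V) ^ 2
      = Fintype.card ι * (1 - 1 / Fintype.card V) * ∑ a, p a ^ 2 := by
  simp only [sum_sq_sum_fiber_sub _ hp, sum_sub_distrib, sum_sq_sum_fiber, hh.sum_collisions, hp,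
    sum_const, card_univ, nsmul_eq_mul]
  ring

theorem IsExactlyUniversal.leftover_hash [Fintype α] [Nonempty ι] [Nonempty V] {h : ι → α → V}
    (hh : IsExactlyUniversal h) {p : α → ℝ} (hp : ∑ a, p a = 1) :
    (∑ i, (1 / 2) * ∑ v, |∑ a with h i a = v, p a - 1 / Fintype.card V|) / Fintype.card ι
      ≤ (1 / 2) * √(Fintype.card V * ∑ a, p a ^ 2) := by
  have hsum := hh.sum_sum_sq_sum_fiber_sub hp
  set N : ℝ := (Fintype.card ι : ℝ)
  set c : ℝ := (Fintype.card V : ℝ)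
  set g : ι → V → ℝ := fun i v => ∑ a with h i a = v, p a - 1 / c
  have hN : 0 < N := by positivity
  have hc : 0 < c := by positivity
  have hsq : ∀ i, √(c * ∑ v, g i v ^ 2) ^ 2 = c * ∑ v, g i v ^ 2 :=
    fun i => Real.sq_sqrt (by positivity)
  have key : ∑ i, ∑ v, |g i v| ≤ N * √(c * ∑ a, p a ^ 2) := calc
    ∑ i, ∑ v, |g i v| ≤ ∑ i, √(c * ∑ v, g i v ^ 2) := by
      refine sum_le_sum fun i _ => ?_
      simpa only [sq_abs, card_univ] using sum_le_sqrt_card_mul_sum_sq univ fun v => |g i v|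
    _ ≤ √(N * ∑ i, c * ∑ v, g i v ^ 2) := by
      refine (sum_le_sqrt_card_mul_sum_sq univ _).trans_eq ?_
      simp only [hsq, card_univ]
      rfl
    _ = √(N ^ 2 * (c * (1 - 1 / c) * ∑ a, p a ^ 2)) := by
      rw [← mul_sum, hsum]
      ring_nf
    _ ≤ √(N ^ 2 * (c * ∑ a, p a ^ 2)) := by
      gcongr √(_ * (?_ * _))
      exact mul_le_of_le_one_right hc.le (sub_le_self _ (by positivity))
    _ = N * √(c * ∑ a, p a ^ 2) := by
      rw [Real.sqrt_mul (sq_nonneg N), Real.sqrt_sq hN.le]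
  rw [← mul_sum, mul_div_assoc]
  gcongr
  rw [div_le_iff₀ hN, mul_comm]
  exact key

end LeftoverHash

section MatrixHash

variable {m n F : Type*} [Fintype n] [Field F]

theorem Matrix.mulVec_left_surjective {x : n → F} (hx : x ≠ 0) :
    Function.Surjective fun M : Matrix m n F => M *ᵥ x := by
  classical
  obtain ⟨i, hi⟩ := Function.ne_iff.1 hx
  refine fun v => ⟨vecMulVec v (Pi.single i (x i)⁻¹), ?_⟩
  dsimp only
  rw [vecMulVec_mulVec, single_dotProduct, inv_mul_cancel₀ hi, MulOpposite.op_one, one_smul]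

variable [Fintype m] [DecidableEq m] [DecidableEq n] [Fintype F] [DecidableEq F]

theorem Matrix.card_filter_mulVec_eq_zero_mul {x : n → F} (hx : x ≠ 0) :
    #{M : Matrix m n F | M *ᵥ x = 0} * Fintype.card (m → F) = Fintype.card (Matrix m n F) := by
  have := (mulVec.addMonoidHomLeft x).card_ker_mul_card_of_surjective
    (Matrix.mulVec_left_surjective (m := m) hx)
  simp only [Nat.card_eq_fintype_card] at this
  rw [← this, ← Fintype.card_subtype]
  congr 1
  exact Fintype.card_congr
    (Equiv.subtypeEquivRight fun _ => (mulVec.addMonoidHomLeft x).mem_ker.symm)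

theorem Matrix.isExactlyUniversal_mulVec :
    IsExactlyUniversal fun (M : Matrix m n F) (x : n → F) => M *ᵥ x := by
  intro a b hab
  simp only [← sub_eq_zero (a := _ *ᵥ a), ← mulVec_sub]
  exact card_filter_mulVec_eq_zero_mul (sub_ne_zero.2 hab)

end MatrixHash

theorem pow_hammingNorm_mul_pow_sub_eq_prod {β R : Type*} [Zero β] [DecidableEq β] [CommMonoid R]
    {n : ℕ} (a b : R) (e : Fin n → β) :
    a ^ hammingNorm e * b ^ (n - hammingNorm e) = ∏ i, if e i = 0 then b else a := by
  rw [prod_ite, prod_const, prod_const, mul_comm]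
  congr 2
  have := card_filter_add_card_filter_not (s := univ) (p := fun i => e i = 0)
  rw [card_univ, Fintype.card_fin] at this
  unfold hammingNorm
  simp only [ne_eq] at *
  omega

theorem sum_pow_hammingNorm_mul_pow_sub {R : Type*} [CommSemiring R] (n : ℕ) (a b : R) :
    ∑ e : Fin n → ZMod 2, a ^ hammingNorm e * b ^ (n - hammingNorm e) = (a + b) ^ n := by
  simp only [pow_hammingNorm_mul_pow_sub_eq_prod]
  rw [← Fintype.sum_pow (fun x : ZMod 2 => if x = 0 then b else a),
    show (univ : Finset (ZMod 2)) = {0, 1} from rfl, sum_pair zero_ne_one]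
  simp [add_comm]

theorem stmt_18_general (n k : ℕ) (hkn : k ≤ n) (τ : ℝ) :
    (∑ H : Matrix (Fin (n - k)) (Fin n) (ZMod 2), (1 / 2) * ∑ v : Fin (n - k) → ZMod 2,
        |(∑ e ∈ univ.filter (fun e : Fin n → ZMod 2 => H.mulVec e = v),
            τ ^ hammingNorm e * (1 - τ) ^ (n - hammingNorm e))
          - 1 / (2 : ℝ) ^ (n - k)|)
      / (Fintype.card (Matrix (Fin (n - k)) (Fin n) (ZMod 2)) : ℝ)
    ≤ (1 / 2) * Real.sqrt ((1 + (1 - 2 * τ) ^ 2) ^ n / (2 : ℝ) ^ k) := by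
  have hw : ∑ e : Fin n → ZMod 2, τ ^ hammingNorm e * (1 - τ) ^ (n - hammingNorm e) = 1 := by
    simp [sum_pow_hammingNorm_mul_pow_sub]
  have hw2 : ∑ e : Fin n → ZMod 2, (τ ^ hammingNorm e * (1 - τ) ^ (n - hammingNorm e)) ^ 2
      = ((1 + (1 - 2 * τ) ^ 2) / 2) ^ n := by
    simp only [mul_pow, pow_right_comm _ _ 2, sum_pow_hammingNorm_mul_pow_sub]
    ring
  have hV : (Fintype.card (Fin (n - k) → ZMod 2) : ℝ) = 2 ^ (n - k) := by simp [ZMod.card]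
  have hLHL := (isExactlyUniversal_mulVec (m := Fin (n - k)) (F := ZMod 2)).leftover_hash hw
  rw [hV, hw2] at hLHL
  refine hLHL.trans_eq ?_
  obtain ⟨j, rfl⟩ := Nat.exists_eq_add_of_le hkn
  rw [Nat.add_sub_cancel_left, div_pow, pow_add 2 k j]
  congr 2
  field_simp

/-- Bernoulli-error variant of the leftover hash lemma over `F_2`: for `H` uniform over
`F_2^{(n-k)×n}`, `e^Ber` with i.i.d. Bernoulli(τ) coordinates and `s` uniform, the expected
statistical distance between `e^Ber·Hᵀ` and `s` is at most
`(1/2)·√(2^{-k}·(1+(1-2τ)²)^n)`. -/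
theorem stmt_18 (n k : ℕ) (hkn : k ≤ n) (τ : ℝ) (hτ0 : 0 ≤ τ) (hτ1 : τ ≤ 1) :
    (∑ H : Matrix (Fin (n - k)) (Fin n) (ZMod 2), (1 / 2) * ∑ v : Fin (n - k) → ZMod 2,
        |(∑ e ∈ univ.filter (fun e : Fin n → ZMod 2 => H.mulVec e = v),
            τ ^ hammingNorm e * (1 - τ) ^ (n - hammingNorm e))
          - 1 / (2 : ℝ) ^ (n - k)|)
      / (Fintype.card (Matrix (Fin (n - k)) (Fin n) (ZMod 2)) : ℝ)
    ≤ (1 / 2) * Real.sqrt ((1 + (1 - 2 * τ) ^ 2) ^ n / (2 : ℝ) ^ k) :=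
  stmt_18_general n k hkn τ
end
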